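/- arXiv:1312.3122 — 3 statements merged into one kernel-verified Lean document; each statement's English description precedes it below -/
import Mathlib

section
/- Let f: 𝔻 → ℂ be twice continuously differentiable on the open unit disk 𝔻 with Re(conj(f)·Δf) ≥ 0 on 𝔻, where Δ is the Laplacian. Then for every p ∈ [4,∞), the function |f|^p is subharmonic on 𝔻; in particular Δ(|f|^p) ≥ 0 wherever f is nonzero. -/
/-!
With `u = ‖f‖²` and `q = p / 2`, we have `‖f‖ ^ p = u ^ q`, and the chain rule gives
`Δ(u ^ q) = q (q - 1) u ^ (q - 2) |∇u|² + q u ^ (q - 1) Δu`, where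
`Δu = 2 (|f_x|² + |f_y|²) + 2 Re(conj f · Δf)`. For `q ≥ 1` every term is nonnegative.
-/

open Complex Metric

/-- The (real) Laplacian Δg = g_xx + g_yy of a function on ℂ. -/
noncomputable def lap {E : Type*} [NormedAddCommGroup E] [NormedSpace ℝ E]
    (g : ℂ → E) (z : ℂ) : E :=
  fderiv ℝ (fun w => fderiv ℝ g w 1) z 1 +
    fderiv ℝ (fun w => fderiv ℝ g w Complex.I) z Complex.I

open Filter Topology RealInnerProductSpace

theorem fderiv_fderiv_apply_const {𝕜 E F : Type*} [NontriviallyNormedField 𝕜]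
    [NormedAddCommGroup E] [NormedSpace 𝕜 E] [NormedAddCommGroup F] [NormedSpace 𝕜 F]
    {f : E → F} {z : E} (hf : DifferentiableAt 𝕜 (fderiv 𝕜 f) z) (e v : E) :
    fderiv 𝕜 (fun w => fderiv 𝕜 f w e) z v = fderiv 𝕜 (fderiv 𝕜 f) z v e := by
  simp [fderiv_clm_apply hf (differentiableAt_const e)]

theorem lap_eq_fderiv_fderiv {E : Type*} [NormedAddCommGroup E] [NormedSpace ℝ E]
    {g : ℂ → E} {z : ℂ} (hg : DifferentiableAt ℝ (fderiv ℝ g) z) :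
    lap g z = fderiv ℝ (fderiv ℝ g) z 1 1 + fderiv ℝ (fderiv ℝ g) z I I := by
  simp only [lap, fderiv_fderiv_apply_const hg]

section NormSqRpow

variable {E F : Type*} [NormedAddCommGroup E] [NormedSpace ℝ E]
  [NormedAddCommGroup F] [InnerProductSpace ℝ F]

theorem fderiv_norm_sq_rpow_apply {g : E → F} {w : E} (hg : DifferentiableAt ℝ g w)
    (hgw : g w ≠ 0) (q : ℝ) (e : E) :
    fderiv ℝ (fun w => (‖g w‖ ^ 2) ^ q) w e
      = q * (‖g w‖ ^ 2) ^ (q - 1) * (2 * ⟪g w, fderiv ℝ g w e⟫) := by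
  have hpos : ‖g w‖ ^ 2 ≠ 0 := by positivity
  rw [(hg.hasFDerivAt.norm_sq.rpow_const (Or.inl hpos)).fderiv]
  simp only [smul_apply, ContinuousLinearMap.comp_apply,
    innerSL_apply_apply, smul_eq_mul, nsmul_eq_mul]
  push_cast
  ring

theorem fderiv_fderiv_norm_sq_rpow_apply {g : E → F} {z : E} (hg : ContDiffAt ℝ 2 g z)
    (hgz : g z ≠ 0) (q : ℝ) (e : E) :
    fderiv ℝ (fun w => fderiv ℝ (fun w => (‖g w‖ ^ 2) ^ q) w e) z e
      = q * (q - 1) * (‖g z‖ ^ 2) ^ (q - 2) * (2 * ⟪g z, fderiv ℝ g z e⟫) ^ 2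
        + q * (‖g z‖ ^ 2) ^ (q - 1) *
          (2 * ‖fderiv ℝ g z e‖ ^ 2 + 2 * ⟪g z, fderiv ℝ (fderiv ℝ g) z e e⟫) := by
  have hdg : DifferentiableAt ℝ g z := hg.differentiableAt (by norm_num)
  have hd2g : DifferentiableAt ℝ (fderiv ℝ g) z :=
    (hg.fderiv_right (m := 1) (by norm_num)).differentiableAt one_ne_zero
  have hfirst : (fun w => fderiv ℝ (fun w => (‖g w‖ ^ 2) ^ q) w e) =ᶠ[𝓝 z]
      fun w => q * (‖g w‖ ^ 2) ^ (q - 1) * (2 * ⟪g w, fderiv ℝ g w e⟫) := by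
    filter_upwards [hg.eventually (by norm_num), hg.continuousAt.eventually_ne hgz]
      with w hw hgw
    exact fderiv_norm_sq_rpow_apply (hw.differentiableAt (by norm_num)) hgw q e
  have hnorm : DifferentiableAt ℝ (fun w => (‖g w‖ ^ 2) ^ (q - 1)) z :=
    (hdg.hasFDerivAt.norm_sq.rpow_const (Or.inl (by positivity))).differentiableAt
  have hdge : DifferentiableAt ℝ (fun w => fderiv ℝ g w e) z :=
    hd2g.clm_apply (differentiableAt_const e)
  have hinner : DifferentiableAt ℝ (fun w => ⟪g w, fderiv ℝ g w e⟫) z := hdg.inner ℝ hdge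
  rw [hfirst.fderiv_eq, fderiv_fun_mul (c := fun w => q * (‖g w‖ ^ 2) ^ (q - 1))
    (d := fun w => 2 * ⟪g w, fderiv ℝ g w e⟫) (by fun_prop) (by fun_prop)]
  simp only [add_apply, smul_apply,
    smul_eq_mul, fderiv_const_mul hnorm, fderiv_const_mul hinner,
    fderiv_norm_sq_rpow_apply hdg hgz, fderiv_inner_apply ℝ hdg hdge,
    fderiv_fderiv_apply_const hd2g, real_inner_self_eq_norm_sq]
  rw [show q - 1 - 1 = q - 2 by ring]
  ring

theorem lap_norm_sq_rpow {g : ℂ → F} {z : ℂ} (hg : ContDiffAt ℝ 2 g z) (hgz : g z ≠ 0)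
    (q : ℝ) :
    lap (fun w => (‖g w‖ ^ 2) ^ q) z
      = q * (q - 1) * (‖g z‖ ^ 2) ^ (q - 2) *
          ((2 * ⟪g z, fderiv ℝ g z 1⟫) ^ 2 + (2 * ⟪g z, fderiv ℝ g z I⟫) ^ 2)
        + q * (‖g z‖ ^ 2) ^ (q - 1) *
          (2 * ‖fderiv ℝ g z 1‖ ^ 2 + 2 * ‖fderiv ℝ g z I‖ ^ 2 + 2 * ⟪g z, lap g z⟫) := by
  have hd2g : DifferentiableAt ℝ (fderiv ℝ g) z :=
    (hg.fderiv_right (m := 1) (by norm_num)).differentiableAt one_ne_zero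
  rw [lap, fderiv_fderiv_norm_sq_rpow_apply hg hgz, fderiv_fderiv_norm_sq_rpow_apply hg hgz,
    lap_eq_fderiv_fderiv hd2g, inner_add_right]
  ring

theorem lap_norm_sq_rpow_nonneg {g : ℂ → F} {z : ℂ} (hg : ContDiffAt ℝ 2 g z) (hgz : g z ≠ 0)
    {q : ℝ} (hq : 1 ≤ q) (hlap : 0 ≤ ⟪g z, lap g z⟫) :
    0 ≤ lap (fun w => (‖g w‖ ^ 2) ^ q) z := by
  have hq0 : 0 ≤ q := by linarith
  have hq1 : 0 ≤ q - 1 := by linarith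
  rw [lap_norm_sq_rpow hg hgz]
  positivity

end NormSqRpow

/-- If f ∈ C²(𝔻) and Re(conj(f)·Δf) ≥ 0 on 𝔻, then for every
p ∈ [4,∞), Δ(|f|^p) ≥ 0 wherever f is nonzero (|f|^p is subharmonic). -/
theorem abs_rpow_subharmonic (f : ℂ → ℂ)
    (hf : ContDiffOn ℝ 2 f (ball (0:ℂ) 1))
    (hRe : ∀ z ∈ ball (0:ℂ) 1, 0 ≤ ((starRingEnd ℂ) (f z) * lap f z).re)
    (p : ℝ) (hp : 4 ≤ p) :
    ∀ z ∈ ball (0:ℂ) 1, f z ≠ 0 → 0 ≤ lap (fun w => ‖f w‖ ^ p) z := by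
  intro z hz hfz
  have hnorm_rpow : (fun w => ‖f w‖ ^ p) = fun w => (‖f w‖ ^ 2) ^ (p / 2) := by
    funext w
    rw [← Real.rpow_natCast, ← Real.rpow_mul (norm_nonneg _)]
    ring_nf
  rw [hnorm_rpow]
  refine lap_norm_sq_rpow_nonneg (hf.contDiffAt (isOpen_ball.mem_nhds hz)) hfz
    (by linarith) ?_
  rw [Complex.inner, mul_comm]
  exact hRe z hz
end

section
/- Let f ∈ C³(𝔻) satisfy Re[(Δf)_z · conj(f_z) + (Δf)_{z̄} · conj(f_{z̄})] ≥ 0 and suppose f belongs to the Dirichlet-type space 𝒟_{γ,2}(𝔻), i.e., ∫_𝔻 (1-|z|)^γ ‖D_f(z)‖² dσ(z) < ∞, where γ > 0. Then there is a constant C > 0 such that ‖D_f(z)‖ ≤ C / (1-|z|)^{1+γ/2} for all z ∈ 𝔻; that is, f belongs to the generalized (1+γ/2)-Bloch space. -/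
/-!
Writing `F = |f_z|² + |f_z̄|² = (|f_x|² + |f_y|²) / 2`, the inequality `Δ|h|² ≥ 2 Re⟨h, Δh⟩` for
`h = f_x, f_y`, together with the commutation of `Δ` with `∂_x, ∂_y` for `C³` functions, gives
`ΔF ≥ 2 Re[(Δf)_z conj f_z + (Δf)_z̄ conj f_z̄] ≥ 0`, so `F` is subharmonic.

For a `C²` function with `Δg ≥ 0`, the radial derivative of the circle average is the flux of `∇g`
through the circle, i.e. the integral of `Δg` over the disc, so circle averages are nondecreasing
and integrating in polar coordinates gives the sub-mean value property on discs. On the disc of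
radius `d = (1 - |z|) / 2` about `z` the weight `(1 - |w|)^γ` is at least `d^γ`, whence
`π d^(2 + γ) F(z) ≤ ∫_𝔻 (1 - |w|)^γ ‖D_f‖²`; finally `‖D_f‖² ≤ 2 F`.
-/

open Complex Metric MeasureTheory

/-- Wirtinger derivative f_z = (f_x - i f_y)/2. -/
noncomputable def wd (f : ℂ → ℂ) (z : ℂ) : ℂ :=
  (fderiv ℝ f z 1 - Complex.I * fderiv ℝ f z Complex.I) / 2

/-- Wirtinger derivative f_z̄ = (f_x + i f_y)/2. -/
noncomputable def wdb (f : ℂ → ℂ) (z : ℂ) : ℂ :=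
  (fderiv ℝ f z 1 + Complex.I * fderiv ℝ f z Complex.I) / 2

/-- ‖D_f(z)‖ = |f_z(z)| + |f_z̄(z)|. -/
noncomputable def Dnorm (f : ℂ → ℂ) (z : ℂ) : ℝ := ‖wd f z‖ + ‖wdb f z‖

open Filter Set Topology Laplacian InnerProductSpace Real

section Laplacian

variable {E : Type*} [NormedAddCommGroup E] [NormedSpace ℝ E] {g : ℂ → E} {z : ℂ}

lemma fderiv_fderiv_apply (hg : DifferentiableAt ℝ (fderiv ℝ g) z) (u v : ℂ) :
    fderiv ℝ (fun w => fderiv ℝ g w v) z u = fderiv ℝ (fderiv ℝ g) z u v := by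
  rw [fderiv_clm_apply hg (differentiableAt_const v)]
  simp

lemma ContDiffAt.differentiableAt_fderiv (hg : ContDiffAt ℝ 2 g z) :
    DifferentiableAt ℝ (fderiv ℝ g) z :=
  (hg.fderiv_right (m := 1) le_rfl).differentiableAt one_ne_zero

lemma laplacian_eq_fderiv_fderiv (g : ℂ → E) (z : ℂ) :
    Δ g z = fderiv ℝ (fderiv ℝ g) z 1 1 + fderiv ℝ (fderiv ℝ g) z I I := by
  simp [laplacian_eq_iteratedFDeriv_complexPlane, iteratedFDeriv_two_apply]

lemma ContDiffAt.laplacian_eq_lap (hg : ContDiffAt ℝ 2 g z) : Δ g z = lap g z := by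
  rw [laplacian_eq_fderiv_fderiv, lap, fderiv_fderiv_apply hg.differentiableAt_fderiv,
    fderiv_fderiv_apply hg.differentiableAt_fderiv]

lemma ContDiffAt.fderiv_fderiv_apply_comm (hg : ContDiffAt ℝ 2 g z) (u v : ℂ) :
    fderiv ℝ (fun w => fderiv ℝ g w v) z u = fderiv ℝ (fun w => fderiv ℝ g w u) z v := by
  rw [fderiv_fderiv_apply hg.differentiableAt_fderiv,
    fderiv_fderiv_apply hg.differentiableAt_fderiv]
  exact hg.isSymmSndFDerivAt (by simp) u v

lemma ContDiffAt.fderiv_apply {n : ℕ} (hg : ContDiffAt ℝ (n + 1) g z) (v : ℂ) :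
    ContDiffAt ℝ n (fun w => fderiv ℝ g w v) z :=
  (hg.fderiv_right le_rfl).clm_apply contDiffAt_const

lemma ContDiffAt.laplacian_eventuallyEq_lap (hg : ContDiffAt ℝ 2 g z) : Δ g =ᶠ[𝓝 z] lap g :=
  (hg.eventually (by simp)).mono fun _ hw => hw.laplacian_eq_lap

lemma ContDiffAt.laplacian_fderiv_apply (hg : ContDiffAt ℝ 3 g z) (v : ℂ) :
    Δ (fun w => fderiv ℝ g w v) z = fderiv ℝ (Δ g) z v := by
  have hsymm : ∀ u, (fun w => fderiv ℝ (fun y => fderiv ℝ g y v) w u) =ᶠ[𝓝 z]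
      fun w => fderiv ℝ (fun y => fderiv ℝ g y u) w v :=
    fun u => (hg.eventually (by simp)).mono fun _ hw =>
      (hw.of_le (by norm_num)).fderiv_fderiv_apply_comm u v
  have hdiff : ∀ u, DifferentiableAt ℝ (fun w => fderiv ℝ (fun y => fderiv ℝ g y u) w u) z :=
    fun u => ((hg.fderiv_apply (n := 2) u).fderiv_apply (n := 1) u).differentiableAt one_ne_zero
  rw [(hg.fderiv_apply v).laplacian_eq_lap,
    (hg.of_le (by norm_num)).laplacian_eventuallyEq_lap.fderiv_eq]
  unfold lap
  rw [(hsymm 1).fderiv_eq, (hsymm I).fderiv_eq, fderiv_fun_add (hdiff 1) (hdiff I), add_apply,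
    (hg.fderiv_apply 1).fderiv_fderiv_apply_comm 1 v,
    (hg.fderiv_apply I).fderiv_fderiv_apply_comm I v]

variable {F : Type*} [NormedAddCommGroup F] [InnerProductSpace ℝ F] {h : ℂ → F}

lemma ContDiffAt.fderiv_fderiv_norm_sq_apply (hh : ContDiffAt ℝ 2 h z) (v : ℂ) :
    fderiv ℝ (fun w => fderiv ℝ (fun y => ‖h y‖ ^ 2) w v) z v =
      2 * (‖fderiv ℝ h z v‖ ^ 2 + ⟪h z, fderiv ℝ (fun w => fderiv ℝ h w v) z v⟫_ℝ) := by
  have hfd : (fun w => fderiv ℝ (fun y => ‖h y‖ ^ 2) w v) =ᶠ[𝓝 z]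
      fun w => 2 * ⟪h w, fderiv ℝ h w v⟫_ℝ :=
    (hh.eventually (by simp)).mono fun w hw => by
      dsimp only
      rw [((hw.differentiableAt two_ne_zero).hasFDerivAt.norm_sq).fderiv]
      simp
  have h1 : DifferentiableAt ℝ h z := hh.differentiableAt two_ne_zero
  have h2 : DifferentiableAt ℝ (fun w => fderiv ℝ h w v) z :=
    (hh.fderiv_apply (n := 1) v).differentiableAt one_ne_zero
  rw [hfd.fderiv_eq, fderiv_const_mul (h1.inner ℝ h2), smul_apply,
    fderiv_inner_apply ℝ h1 h2, real_inner_self_eq_norm_sq, smul_eq_mul]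
  ring

lemma ContDiffAt.two_inner_le_laplacian_norm_sq (hh : ContDiffAt ℝ 2 h z) :
    2 * ⟪h z, Δ h z⟫_ℝ ≤ Δ (fun w => ‖h w‖ ^ 2) z := by
  rw [hh.laplacian_eq_lap, (hh.norm_sq ℝ).laplacian_eq_lap, lap, lap,
    hh.fderiv_fderiv_norm_sq_apply, hh.fderiv_fderiv_norm_sq_apply, inner_add_right]
  nlinarith [sq_nonneg ‖fderiv ℝ h z 1‖, sq_nonneg ‖fderiv ℝ h z I‖]

end Laplacian

section CircleAverage

variable {E : Type*} [NormedAddCommGroup E] [NormedSpace ℝ E] {U : Set ℂ} {c : ℂ} {R r : ℝ}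

lemma circleMap_mem_closedBall_of_abs_le (hr : |r| ≤ R) (θ : ℝ) :
    circleMap c r θ ∈ closedBall c R :=
  closedBall_subset_closedBall hr (sphere_subset_closedBall (circleMap_mem_sphere' c r θ))

lemma hasDerivAt_circleMap_radius (c : ℂ) (r θ : ℝ) :
    HasDerivAt (fun s => circleMap c s θ) (circleMap 0 1 θ) r := by
  simpa [circleMap] using ((Complex.ofRealCLM.hasDerivAt (x := r)).mul_const
    (Complex.exp (θ * I))).const_add c

lemma hasDerivAt_circleAverage_radius {φ : ℂ → E} (hU : IsOpen U) (hφ : ContDiffOn ℝ 1 φ U)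
    (hB : closedBall c R ⊆ U) (hr : |r| < R) :
    HasDerivAt (circleAverage φ c)
      ((2 * π)⁻¹ • ∫ θ in 0..2 * π, fderiv ℝ φ (circleMap c r θ) (circleMap 0 1 θ)) r := by
  have hcont : ContinuousOn (fderiv ℝ φ) U := hφ.continuousOn_fderiv_of_isOpen hU le_rfl
  obtain ⟨M, hM⟩ := (isCompact_closedBall c R).exists_bound_of_continuousOn (hcont.mono hB)
  have hnhds : ball r (R - |r|) ∈ 𝓝 r := ball_mem_nhds r (by linarith)
  have hmem : ∀ x ∈ ball r (R - |r|), ∀ θ, circleMap c x θ ∈ closedBall c R := by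
    intro x hx θ
    refine circleMap_mem_closedBall_of_abs_le ?_ θ
    have := abs_sub_abs_le_abs_sub x r
    rw [mem_ball, Real.dist_eq] at hx
    linarith
  have hφc : ∀ x ∈ ball r (R - |r|), Continuous fun θ => φ (circleMap c x θ) := fun x hx =>
    hφ.continuousOn.comp_continuous (continuous_circleMap c x) fun θ => hB (hmem x hx θ)
  have hφ'c : ∀ x ∈ ball r (R - |r|),
      Continuous fun θ => fderiv ℝ φ (circleMap c x θ) (circleMap 0 1 θ) := fun x hx =>
    (hcont.comp_continuous (continuous_circleMap c x) fun θ => hB (hmem x hx θ)).clm_apply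
      (continuous_circleMap 0 1)
  have hr' : r ∈ ball r (R - |r|) := mem_ball_self (by linarith)
  refine (intervalIntegral.hasDerivAt_integral_of_dominated_loc_of_deriv_le
    (F' := fun x θ => fderiv ℝ φ (circleMap c x θ) (circleMap 0 1 θ)) (bound := fun _ => M)
    hnhds ?_ ((hφc r hr').intervalIntegrable _ _)
    (hφ'c r hr').aestronglyMeasurable ?_ intervalIntegrable_const ?_).2.const_smul _
  · filter_upwards [hnhds] with x hx using (hφc x hx).aestronglyMeasurable
  · refine Eventually.of_forall fun θ _ x hx => ?_
    calc ‖fderiv ℝ φ (circleMap c x θ) (circleMap 0 1 θ)‖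
        ≤ ‖fderiv ℝ φ (circleMap c x θ)‖ * ‖circleMap 0 1 θ‖ := ContinuousLinearMap.le_opNorm _ _
      _ ≤ M := by simpa using hM _ (hmem x hx θ)
  · refine Eventually.of_forall fun θ _ x hx => ?_
    have hd := (hφ.differentiableOn one_ne_zero _ (hB (hmem x hx θ))).differentiableAt
      (hU.mem_nhds (hB (hmem x hx θ)))
    exact hd.hasFDerivAt.comp_hasDerivAt x (hasDerivAt_circleMap_radius c x θ)

lemma ContinuousLinearMap.apply_self_add_apply_self_mul_I (T : ℂ →L[ℝ] ℂ →L[ℝ] E) {u : ℂ}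
    (hu : ‖u‖ = 1) : T u u + T (u * I) (u * I) = T 1 1 + T I I := by
  have hsq : u.re * u.re + u.im * u.im = 1 := by
    rw [← Complex.normSq_apply, Complex.normSq_eq_norm_sq, hu, one_pow]
  have hu' : u = u.re • (1 : ℂ) + u.im • I := by simp [Complex.real_smul, Complex.re_add_im]
  have huI : u * I = (-u.im) • (1 : ℂ) + u.re • I := by
    apply Complex.ext <;> simp [Complex.real_smul]
  generalize u.re = a, u.im = b at hsq hu' huI
  rw [huI, hu']
  simp only [map_add, map_smul, add_apply, smul_apply, smul_add, smul_smul]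
  rw [show a * a = 1 - b * b by linarith]
  module

/-- The integrand is `r⁻¹ ∂²_θ` of `θ ↦ g (circleMap c r θ)`. -/
lemma integral_angular_part_eq_zero [CompleteSpace E] {g : ℂ → E} (hU : IsOpen U)
    (hg : ContDiffOn ℝ 2 g U) (hB : closedBall c R ⊆ U) (hr : |r| ≤ R) :
    ∫ θ in 0..2 * π, (r • fderiv ℝ (fderiv ℝ g) (circleMap c r θ) (circleMap 0 1 θ * I)
        (circleMap 0 1 θ * I) - fderiv ℝ g (circleMap c r θ) (circleMap 0 1 θ)) = 0 := by
  set D₁ := fderiv ℝ g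
  set D₂ := fderiv ℝ (fderiv ℝ g)
  have hD₁ : ContDiffOn ℝ 1 D₁ U := hg.fderiv_of_isOpen hU (by norm_num)
  have hmem : ∀ θ, circleMap c r θ ∈ U := fun θ => hB (circleMap_mem_closedBall_of_abs_le hr θ)
  have hD₁c := hD₁.continuousOn.comp_continuous (continuous_circleMap c r) hmem
  have hD₂c := (hD₁.continuousOn_fderiv_of_isOpen hU le_rfl).comp_continuous
    (continuous_circleMap c r) hmem
  have he : Continuous (circleMap 0 1) := continuous_circleMap 0 1
  have heI : Continuous fun θ => circleMap 0 1 θ * I := he.mul continuous_const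
  have hderiv : ∀ θ, HasDerivAt (fun θ => D₁ (circleMap c r θ) (circleMap 0 1 θ * I))
      (r • D₂ (circleMap c r θ) (circleMap 0 1 θ * I) (circleMap 0 1 θ * I) -
        D₁ (circleMap c r θ) (circleMap 0 1 θ)) θ := by
    intro θ
    have hD : HasFDerivAt D₁ (D₂ (circleMap c r θ)) (circleMap c r θ) :=
      ((hD₁.differentiableOn one_ne_zero _ (hmem θ)).differentiableAt
        (hU.mem_nhds (hmem θ))).hasFDerivAt
    have hrI : circleMap 0 r θ * I = r • (circleMap 0 1 θ * I) := by
      simp [circleMap, Complex.real_smul, mul_assoc]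
    convert (hD.comp_hasDerivAt θ (hasDerivAt_circleMap c r θ)).clm_apply
      ((hasDerivAt_circleMap 0 1 θ).mul_const I) using 1
    · rfl
    rw [hrI, mul_assoc, I_mul_I, mul_neg_one, map_smul, smul_apply, map_neg, sub_eq_add_neg]
    rfl
  have hint : IntervalIntegrable (fun θ => r • D₂ (circleMap c r θ) (circleMap 0 1 θ * I)
      (circleMap 0 1 θ * I) - D₁ (circleMap c r θ) (circleMap 0 1 θ)) volume 0 (2 * π) :=
    ((((hD₂c.clm_apply heI).clm_apply heI).const_smul r).sub
      (hD₁c.clm_apply he)).intervalIntegrable _ _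
  rw [intervalIntegral.integral_eq_sub_of_hasDerivAt (fun θ _ => hderiv θ) hint,
    (periodic_circleMap c r).eq, (periodic_circleMap 0 1).eq, sub_self]

/-- The integrand is `∂_r (r ∂_r g)` in polar coordinates, and
`∂_r (r ∂_r g) + r⁻¹ ∂²_θ g = r Δg`. -/
lemma integral_radial_part_eq_smul_integral_laplacian [CompleteSpace E] {g : ℂ → E}
    (hU : IsOpen U) (hg : ContDiffOn ℝ 2 g U) (hB : closedBall c R ⊆ U) (hr : |r| ≤ R) :
    ∫ θ in 0..2 * π, (r • fderiv ℝ (fderiv ℝ g) (circleMap c r θ) (circleMap 0 1 θ)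
        (circleMap 0 1 θ) + fderiv ℝ g (circleMap c r θ) (circleMap 0 1 θ)) =
      r • ∫ θ in 0..2 * π, Δ g (circleMap c r θ) := by
  have hD₁ : ContDiffOn ℝ 1 (fderiv ℝ g) U := hg.fderiv_of_isOpen hU (by norm_num)
  have hmem : ∀ θ, circleMap c r θ ∈ U := fun θ => hB (circleMap_mem_closedBall_of_abs_le hr θ)
  have hD₁c := hD₁.continuousOn.comp_continuous (continuous_circleMap c r) hmem
  have hD₂c := (hD₁.continuousOn_fderiv_of_isOpen hU le_rfl).comp_continuous
    (continuous_circleMap c r) hmem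
  have he : Continuous (circleMap 0 1) := continuous_circleMap 0 1
  have heI : Continuous fun θ => circleMap 0 1 θ * I := he.mul continuous_const
  have hradial : IntervalIntegrable (fun θ => r • fderiv ℝ (fderiv ℝ g) (circleMap c r θ)
      (circleMap 0 1 θ) (circleMap 0 1 θ) + fderiv ℝ g (circleMap c r θ) (circleMap 0 1 θ))
      volume 0 (2 * π) :=
    ((((hD₂c.clm_apply he).clm_apply he).const_smul r).add
      (hD₁c.clm_apply he)).intervalIntegrable _ _
  have hangular : IntervalIntegrable (fun θ => r • fderiv ℝ (fderiv ℝ g) (circleMap c r θ)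
      (circleMap 0 1 θ * I) (circleMap 0 1 θ * I) - fderiv ℝ g (circleMap c r θ) (circleMap 0 1 θ))
      volume 0 (2 * π) :=
    ((((hD₂c.clm_apply heI).clm_apply heI).const_smul r).sub
      (hD₁c.clm_apply he)).intervalIntegrable _ _
  rw [← add_zero (intervalIntegral _ _ _ _), ← integral_angular_part_eq_zero hU hg hB hr,
    ← intervalIntegral.integral_add hradial hangular, ← intervalIntegral.integral_smul]
  refine intervalIntegral.integral_congr fun θ _ => ?_
  have hrot := (fderiv ℝ (fderiv ℝ g) (circleMap c r θ)).apply_self_add_apply_self_mul_I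
    (u := circleMap 0 1 θ) (by simp)
  rw [laplacian_eq_fderiv_fderiv, ← hrot]
  simp only [smul_add]
  abel

/-- On the circle of radius `r`, `fderiv ℝ g w (w - c)` is `r ∂_r g`. -/
lemma hasDerivAt_circleAverage_fderiv_sub_center [CompleteSpace E] {g : ℂ → E}
    (hU : IsOpen U) (hg : ContDiffOn ℝ 2 g U) (hB : closedBall c R ⊆ U) (hr : |r| < R) :
    HasDerivAt (circleAverage (fun w => fderiv ℝ g w (w - c)) c)
      ((2 * π)⁻¹ • r • ∫ θ in 0..2 * π, Δ g (circleMap c r θ)) r := by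
  have hD₁ : ContDiffOn ℝ 1 (fderiv ℝ g) U := hg.fderiv_of_isOpen hU (by norm_num)
  have hψ : ContDiffOn ℝ 1 (fun w => fderiv ℝ g w (w - c)) U :=
    hD₁.clm_apply (contDiffOn_id.sub contDiffOn_const)
  rw [← integral_radial_part_eq_smul_integral_laplacian (g := g) hU hg hB hr.le]
  convert hasDerivAt_circleAverage_radius hU hψ hB hr using 3
  ext θ
  have hmem : circleMap c r θ ∈ U := hB (circleMap_mem_closedBall_of_abs_le hr.le θ)
  have hD : HasFDerivAt (fderiv ℝ g) (fderiv ℝ (fderiv ℝ g) (circleMap c r θ)) (circleMap c r θ) :=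
    ((hD₁.differentiableOn one_ne_zero _ hmem).differentiableAt (hU.mem_nhds hmem)).hasFDerivAt
  have hcircle : circleMap c r θ - c = r • circleMap 0 1 θ := by
    simp [circleMap, Complex.real_smul]
  have hψ' : HasFDerivAt (fun w => fderiv ℝ g w (w - c)) _ (circleMap c r θ) :=
    hD.clm_apply ((hasFDerivAt_id _).sub_const c)
  rw [hψ'.fderiv, add_apply, ContinuousLinearMap.flip_apply, hcircle, map_smul, add_comm]
  rfl

theorem integral_ball_eq_integral_circleAverage {g : ℂ → E} (hR : 0 ≤ R)
    (hg : ContinuousOn g (closedBall c R)) :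
    ∫ w in ball c R, g w = ∫ r in 0..R, (2 * π * r) • circleAverage g c r := by
  set S : Set (ℝ × ℝ) := Ioo 0 R ×ˢ Ioo (-π) π
  set Φ : ℝ × ℝ → E := fun p => p.1 • g (circleMap c p.1 p.2)
  have hpolar : ∀ p ∈ polarCoord.target,
      p.1 • (ball c R).indicator g (c + Complex.polarCoord.symm p) = S.indicator Φ p := by
    rintro ⟨r, θ⟩ ⟨hr, hθ⟩
    have hc : c + Complex.polarCoord.symm (r, θ) = circleMap c r θ := by
      simp [circleMap, Complex.exp_mul_I]
    have hmem : circleMap c r θ ∈ ball c R ↔ (r, θ) ∈ S := by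
      simp [S, hθ, abs_of_pos (mem_Ioi.1 hr), mem_Ioi.1 hr, dist_eq_norm, circleMap_sub_center]
    by_cases h : (r, θ) ∈ S
    · rw [hc, indicator_of_mem (hmem.2 h), indicator_of_mem h]
    · rw [hc, indicator_of_notMem (mt hmem.1 h), indicator_of_notMem h, smul_zero]
  have hΦ : IntegrableOn Φ S := by
    refine (ContinuousOn.integrableOn_compact (isCompact_Icc.prod isCompact_Icc) ?_).mono_set
      (prod_mono Ioo_subset_Icc_self Ioo_subset_Icc_self)
    refine continuousOn_fst.smul (hg.comp (by fun_prop) fun p hp => ?_)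
    exact circleMap_mem_closedBall_of_abs_le (by rw [abs_of_nonneg hp.1.1]; exact hp.1.2) p.2
  have hS : polarCoord.target ∩ S = S := inter_eq_self_of_subset_right
    (prod_mono Ioo_subset_Ioi_self subset_rfl)
  rw [← integral_indicator measurableSet_ball, ← integral_add_left_eq_self _ c,
    ← Complex.integral_comp_polarCoord_symm,
    setIntegral_congr_fun polarCoord.open_target.measurableSet hpolar,
    setIntegral_indicator (measurableSet_Ioo.prod measurableSet_Ioo), hS, Measure.volume_eq_prod,
    setIntegral_prod _ hΦ, intervalIntegral.integral_of_le hR, integral_Ioc_eq_integral_Ioo]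
  refine setIntegral_congr_fun measurableSet_Ioo fun r _ => ?_
  have hperiod := ((periodic_circleMap c r).comp g).intervalIntegral_add_eq (-π) 0
  rw [show -π + 2 * π = π by ring, zero_add] at hperiod
  rw [integral_smul, ← integral_Ioc_eq_integral_Ioo,
    ← intervalIntegral.integral_of_le (by linarith [pi_pos])]
  simp only [Function.comp_def] at hperiod
  rw [hperiod, circleAverage, smul_smul, show 2 * π * r * (2 * π)⁻¹ = r by field_simp]

variable {g : ℂ → ℝ}

lemma circleAverage_fderiv_sub_center_nonneg (hU : IsOpen U) (hg : ContDiffOn ℝ 2 g U)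
    (hΔ : ∀ w ∈ U, 0 ≤ Δ g w) (hB : closedBall c R ⊆ U) (hr : r ∈ Ico 0 R) :
    0 ≤ circleAverage (fun w => fderiv ℝ g w (w - c)) c r := by
  have hderiv : ∀ x ∈ Ico 0 R, HasDerivAt (circleAverage (fun w => fderiv ℝ g w (w - c)) c)
      ((2 * π)⁻¹ • x • ∫ θ in 0..2 * π, Δ g (circleMap c x θ)) x := fun x hx =>
    hasDerivAt_circleAverage_fderiv_sub_center hU hg hB (by rw [abs_of_nonneg hx.1]; exact hx.2)
  have hmono : MonotoneOn (circleAverage (fun w => fderiv ℝ g w (w - c)) c) (Ico 0 R) := by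
    refine monotoneOn_of_hasDerivWithinAt_nonneg (convex_Ico 0 R)
      (f' := fun x => (2 * π)⁻¹ • x • ∫ θ in 0..2 * π, Δ g (circleMap c x θ))
      (fun x hx => (hderiv x hx).continuousAt.continuousWithinAt) ?_ ?_
    · rw [interior_Ico]
      exact fun x hx => (hderiv x (Ioo_subset_Ico_self hx)).hasDerivWithinAt
    · rw [interior_Ico]
      refine fun x hx => smul_nonneg (by positivity) (smul_nonneg hx.1.le ?_)
      exact intervalIntegral.integral_nonneg (by positivity) fun θ _ =>
        hΔ _ (hB (circleMap_mem_closedBall_of_abs_le (by rw [abs_of_pos hx.1]; exact hx.2.le) θ))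
  simpa using hmono ⟨le_rfl, hr.1.trans_lt hr.2⟩ hr hr.1

theorem monotoneOn_circleAverage_of_laplacian_nonneg (hU : IsOpen U) (hg : ContDiffOn ℝ 2 g U)
    (hΔ : ∀ w ∈ U, 0 ≤ Δ g w) (hB : closedBall c R ⊆ U) :
    MonotoneOn (circleAverage g c) (Icc 0 R) := by
  set m' : ℝ → ℝ := fun x =>
    (2 * π)⁻¹ • ∫ θ in 0..2 * π, fderiv ℝ g (circleMap c x θ) (circleMap 0 1 θ)
  have hflux : ∀ x, circleAverage (fun w => fderiv ℝ g w (w - c)) c x = x * m' x := fun x => by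
    have hcircle : ∀ θ, circleMap c x θ - c = x • circleMap 0 1 θ := fun θ => by
      simp [circleMap, Complex.real_smul]
    simp only [circleAverage, m', hcircle, map_smul, smul_eq_mul,
      intervalIntegral.integral_const_mul]
    ring
  refine monotoneOn_of_hasDerivWithinAt_nonneg (f' := m') (convex_Icc 0 R) ?_ ?_ ?_
  · refine ContinuousOn.circleAverage (hg.continuousOn.mono fun w hw => hB ?_) fun x hx => hx.1
    simpa [dist_eq_norm] using hw.2
  · rw [interior_Icc]
    exact fun x hx => (hasDerivAt_circleAverage_radius hU (hg.of_le one_le_two) hB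
      (by rw [abs_of_pos hx.1]; exact hx.2)).hasDerivWithinAt
  · rw [interior_Icc]
    refine fun x hx => nonneg_of_mul_nonneg_right ?_ hx.1
    rw [← hflux]
    exact circleAverage_fderiv_sub_center_nonneg hU hg hΔ hB (Ioo_subset_Ico_self hx)

theorem le_circleAverage_of_laplacian_nonneg (hU : IsOpen U) (hg : ContDiffOn ℝ 2 g U)
    (hΔ : ∀ w ∈ U, 0 ≤ Δ g w) (hB : closedBall c R ⊆ U) (hR : 0 ≤ R) :
    g c ≤ circleAverage g c R := by
  simpa using monotoneOn_circleAverage_of_laplacian_nonneg hU hg hΔ hB ⟨le_rfl, hR⟩ ⟨hR, le_rfl⟩ hR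

theorem mul_le_integral_ball_of_laplacian_nonneg (hU : IsOpen U) (hg : ContDiffOn ℝ 2 g U)
    (hΔ : ∀ w ∈ U, 0 ≤ Δ g w) (hB : closedBall c R ⊆ U) (hR : 0 ≤ R) :
    π * R ^ 2 * g c ≤ ∫ w in ball c R, g w := by
  have hgc : ContinuousOn g (closedBall c R) := hg.continuousOn.mono hB
  have hmean : ContinuousOn (circleAverage g c) (Icc 0 R) :=
    ContinuousOn.circleAverage (hgc.mono fun w hw => by simpa [dist_eq_norm] using hw.2)
      fun r hr => hr.1
  have hconst : π * R ^ 2 * g c = ∫ r in 0..R, (2 * π * r) • g c := by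
    rw [intervalIntegral.integral_smul_const, intervalIntegral.integral_const_mul, integral_id,
      smul_eq_mul]
    ring
  rw [integral_ball_eq_integral_circleAverage hR hgc, hconst]
  refine intervalIntegral.integral_mono_on hR
    ((by fun_prop : Continuous fun r : ℝ => (2 * π * r) • g c).intervalIntegrable _ _)
    ((continuousOn_const.mul continuousOn_id).smul hmean |>.intervalIntegrable_of_Icc hR)
    fun r hr => smul_le_smul_of_nonneg_left ?_ (by positivity [hr.1])
  exact le_circleAverage_of_laplacian_nonneg hU hg hΔ
    ((closedBall_subset_closedBall hr.2).trans hB) hr.1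

end CircleAverage

section Wirtinger

variable {f : ℂ → ℂ} {z : ℂ}

lemma sq_norm_wd_add_sq_norm_wdb (f : ℂ → ℂ) (w : ℂ) :
    ‖wd f w‖ ^ 2 + ‖wdb f w‖ ^ 2 = (‖fderiv ℝ f w 1‖ ^ 2 + ‖fderiv ℝ f w I‖ ^ 2) / 2 := by
  simp only [wd, wdb, norm_div, div_pow, norm_add_sq_real, norm_sub_sq_real, norm_mul, norm_I,
    one_mul, Complex.norm_two]
  ring

lemma re_wd_mul_conj_add_wdb_mul_conj (g f : ℂ → ℂ) (w : ℂ) :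
    (wd g w * starRingEnd ℂ (wd f w) + wdb g w * starRingEnd ℂ (wdb f w)).re =
      (⟪fderiv ℝ f w 1, fderiv ℝ g w 1⟫_ℝ + ⟪fderiv ℝ f w I, fderiv ℝ g w I⟫_ℝ) / 2 := by
  have hconj (a b c d : ℂ) : (c - I * d) / 2 * starRingEnd ℂ ((a - I * b) / 2) +
      (c + I * d) / 2 * starRingEnd ℂ ((a + I * b) / 2) =
        (c * starRingEnd ℂ a + d * starRingEnd ℂ b) / 2 := by
    simp only [map_div₀, map_sub, map_add, map_mul, conj_I, map_ofNat]
    linear_combination (-(d * starRingEnd ℂ b) / 2) * I_sq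
  simp only [wd, wdb, hconj, Complex.inner, div_ofNat_re, add_re]

lemma contDiffAt_wd {n : ℕ} (hf : ContDiffAt ℝ (n + 1) f z) : ContDiffAt ℝ n (wd f) z :=
  ((hf.fderiv_apply 1).sub (contDiffAt_const.mul (hf.fderiv_apply I))).div_const 2

lemma contDiffAt_wdb {n : ℕ} (hf : ContDiffAt ℝ (n + 1) f z) : ContDiffAt ℝ n (wdb f) z :=
  ((hf.fderiv_apply 1).add (contDiffAt_const.mul (hf.fderiv_apply I))).div_const 2

theorem two_re_le_laplacian_sq_norm_wd_add_sq_norm_wdb (hf : ContDiffAt ℝ 3 f z) :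
    2 * (wd (Δ f) z * starRingEnd ℂ (wd f z) + wdb (Δ f) z * starRingEnd ℂ (wdb f z)).re ≤
      Δ (fun w => ‖wd f w‖ ^ 2 + ‖wdb f w‖ ^ 2) z := by
  set a : ℂ → ℝ := fun w => ‖fderiv ℝ f w 1‖ ^ 2
  set b : ℂ → ℝ := fun w => ‖fderiv ℝ f w I‖ ^ 2
  have ha : ContDiffAt ℝ 2 a z := (hf.fderiv_apply (n := 2) 1).norm_sq ℝ
  have hb : ContDiffAt ℝ 2 b z := (hf.fderiv_apply (n := 2) I).norm_sq ℝ
  have hsplit : (fun w => ‖wd f w‖ ^ 2 + ‖wdb f w‖ ^ 2) = (2⁻¹ : ℝ) • (a + b) := by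
    ext w
    simp only [sq_norm_wd_add_sq_norm_wdb, Pi.smul_apply, Pi.add_apply, smul_eq_mul, a, b]
    ring
  rw [hsplit, laplacian_smul (f := a + b) _ (ha.add hb), ha.laplacian_add hb,
    re_wd_mul_conj_add_wdb_mul_conj,
    ← hf.laplacian_fderiv_apply 1, ← hf.laplacian_fderiv_apply I, smul_eq_mul]
  linarith [(hf.fderiv_apply (n := 2) 1).two_inner_le_laplacian_norm_sq,
    (hf.fderiv_apply (n := 2) I).two_inner_le_laplacian_norm_sq]

theorem laplacian_sq_norm_wd_add_sq_norm_wdb_nonneg (hf : ContDiffAt ℝ 3 f z)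
    (hRe : 0 ≤ (wd (lap f) z * starRingEnd ℂ (wd f z) +
      wdb (lap f) z * starRingEnd ℂ (wdb f z)).re) :
    0 ≤ Δ (fun w => ‖wd f w‖ ^ 2 + ‖wdb f w‖ ^ 2) z := by
  have hΔ := (hf.of_le (by norm_num)).laplacian_eventuallyEq_lap.fderiv_eq (𝕜 := ℝ)
  have hwd : wd (lap f) z = wd (Δ f) z := by simp only [wd, hΔ]
  have hwdb : wdb (lap f) z = wdb (Δ f) z := by simp only [wdb, hΔ]
  rw [hwd, hwdb] at hRe
  linarith [two_re_le_laplacian_sq_norm_wd_add_sq_norm_wdb hf]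

lemma sq_norm_wd_add_sq_norm_wdb_le_Dnorm_sq (f : ℂ → ℂ) (w : ℂ) :
    ‖wd f w‖ ^ 2 + ‖wdb f w‖ ^ 2 ≤ Dnorm f w ^ 2 := by
  rw [Dnorm]
  nlinarith [norm_nonneg (wd f w), norm_nonneg (wdb f w)]

end Wirtinger

lemma half_one_sub_norm_le_one_sub_norm {E : Type*} [SeminormedAddCommGroup E] {z w : E}
    (hw : w ∈ closedBall z ((1 - ‖z‖) / 2)) : (1 - ‖z‖) / 2 ≤ 1 - ‖w‖ := by
  rw [mem_closedBall, dist_eq_norm] at hw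
  linarith [norm_le_norm_add_norm_sub' w z]

section WeightedMeanValue

variable {F G : ℂ → ℝ} {γ : ℝ} {z : ℂ}

theorem pi_mul_rpow_mul_le_integral_of_laplacian_nonneg (hγ : 0 ≤ γ)
    (hF : ContDiffOn ℝ 2 F (ball 0 1)) (hΔ : ∀ w ∈ ball (0 : ℂ) 1, 0 ≤ Δ F w)
    (hFG : ∀ w ∈ ball (0 : ℂ) 1, F w ≤ G w) (hG₀ : ∀ w ∈ ball (0 : ℂ) 1, 0 ≤ G w)
    (hG : IntegrableOn (fun w => (1 - ‖w‖) ^ γ * G w) (ball 0 1)) (hz : z ∈ ball (0 : ℂ) 1) :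
    π * ((1 - ‖z‖) / 2) ^ (2 + γ) * F z ≤ ∫ w in ball (0 : ℂ) 1, (1 - ‖w‖) ^ γ * G w := by
  set R := (1 - ‖z‖) / 2
  have hR : 0 < R := by simp only [R]; linarith [mem_ball_zero_iff.1 hz]
  have hdist : ∀ w ∈ closedBall z R, R ≤ 1 - ‖w‖ := fun w hw =>
    half_one_sub_norm_le_one_sub_norm hw
  have hsub : closedBall z R ⊆ ball 0 1 := fun w hw =>
    mem_ball_zero_iff.2 (by linarith [hdist w hw])
  have hsub' : ball z R ⊆ ball 0 1 := ball_subset_closedBall.trans hsub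
  have hFint : IntegrableOn F (ball z R) :=
    ((hF.continuousOn.mono hsub).integrableOn_compact (isCompact_closedBall z R)).mono_set
      ball_subset_closedBall
  calc π * R ^ (2 + γ) * F z = R ^ γ * (π * R ^ 2 * F z) := by
        rw [rpow_add hR, rpow_two]; ring
    _ ≤ R ^ γ * ∫ w in ball z R, F w := by
        gcongr
        exact mul_le_integral_ball_of_laplacian_nonneg isOpen_ball hF hΔ hsub hR.le
    _ = ∫ w in ball z R, R ^ γ * F w := (integral_const_mul _ _).symm
    _ ≤ ∫ w in ball z R, (1 - ‖w‖) ^ γ * G w := by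
        refine setIntegral_mono_on (hFint.const_mul _) (hG.mono_set hsub') measurableSet_ball
          fun w hw => ?_
        calc R ^ γ * F w ≤ R ^ γ * G w := by gcongr; exact hFG w (hsub' hw)
          _ ≤ (1 - ‖w‖) ^ γ * G w := by
              gcongr
              · exact hG₀ w (hsub' hw)
              · exact hdist w (ball_subset_closedBall hw)
    _ ≤ ∫ w in ball (0 : ℂ) 1, (1 - ‖w‖) ^ γ * G w := by
        refine setIntegral_mono_set hG ?_ (Eventually.of_forall hsub')
        filter_upwards [ae_restrict_mem measurableSet_ball] with w hw
        exact mul_nonneg (rpow_nonneg (by linarith [mem_ball_zero_iff.1 hw]) _) (hG₀ w hw)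

theorem mul_rpow_le_integral_of_laplacian_nonneg (hγ : 0 ≤ γ)
    (hF : ContDiffOn ℝ 2 F (ball 0 1)) (hΔ : ∀ w ∈ ball (0 : ℂ) 1, 0 ≤ Δ F w)
    (hFG : ∀ w ∈ ball (0 : ℂ) 1, F w ≤ G w) (hG₀ : ∀ w ∈ ball (0 : ℂ) 1, 0 ≤ G w)
    (hG : IntegrableOn (fun w => (1 - ‖w‖) ^ γ * G w) (ball 0 1)) (hz : z ∈ ball (0 : ℂ) 1) :
    F z * (1 - ‖z‖) ^ (2 + γ) ≤ 2 ^ (2 + γ) / π * ∫ w in ball (0 : ℂ) 1, (1 - ‖w‖) ^ γ * G w := by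
  have hmean := pi_mul_rpow_mul_le_integral_of_laplacian_nonneg hγ hF hΔ hFG hG₀ hG hz
  rw [div_rpow (by linarith [mem_ball_zero_iff.1 hz]) zero_le_two] at hmean
  rw [div_mul_eq_mul_div, le_div_iff₀ pi_pos]
  have h2 : (0 : ℝ) < 2 ^ (2 + γ) := by positivity
  calc F z * (1 - ‖z‖) ^ (2 + γ) * π
      = 2 ^ (2 + γ) * (π * ((1 - ‖z‖) ^ (2 + γ) / 2 ^ (2 + γ)) * F z) := by field_simp
    _ ≤ _ := by gcongr

end WeightedMeanValue

/-- If f ∈ C³(𝔻), Re[(Δf)_z conj(f_z) + (Δf)_z̄ conj(f_z̄)] ≥ 0 and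
f ∈ 𝒟_{γ,2}(𝔻) (γ > 0), then ‖D_f(z)‖ ≤ C/(1-|z|)^{1+γ/2} on 𝔻. -/
theorem dirichlet_implies_bloch (f : ℂ → ℂ) (γ : ℝ) (hγ : 0 < γ)
    (hf : ContDiffOn ℝ 3 f (ball (0:ℂ) 1))
    (hRe : ∀ z ∈ ball (0:ℂ) 1,
      0 ≤ (wd (lap f) z * (starRingEnd ℂ) (wd f z) +
            wdb (lap f) z * (starRingEnd ℂ) (wdb f z)).re)
    (hDir : IntegrableOn (fun z : ℂ => (1 - ‖z‖) ^ γ * (Dnorm f z) ^ 2)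
      (ball (0:ℂ) 1)) :
    ∃ C : ℝ, 0 < C ∧ ∀ z ∈ ball (0:ℂ) 1,
      Dnorm f z ≤ C / (1 - ‖z‖) ^ (1 + γ / 2) := by
  have hf₃ : ∀ z ∈ ball (0 : ℂ) 1, ContDiffAt ℝ 3 f z := fun z hz =>
    hf.contDiffAt (isOpen_ball.mem_nhds hz)
  have hF : ContDiffOn ℝ 2 (fun w => ‖wd f w‖ ^ 2 + ‖wdb f w‖ ^ 2) (ball 0 1) := fun w hw =>
    (((contDiffAt_wd (hf₃ w hw)).norm_sq ℝ).add
      ((contDiffAt_wdb (hf₃ w hw)).norm_sq ℝ)).contDiffWithinAt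
  set K := 2 * (2 ^ (2 + γ) / π * ∫ w in ball (0 : ℂ) 1, (1 - ‖w‖) ^ γ * Dnorm f w ^ 2)
  refine ⟨√K + 1, by positivity, fun z hz => ?_⟩
  have hd : 0 < 1 - ‖z‖ := sub_pos.2 (mem_ball_zero_iff.1 hz)
  have hmean := mul_rpow_le_integral_of_laplacian_nonneg hγ.le hF
    (fun w hw => laplacian_sq_norm_wd_add_sq_norm_wdb_nonneg (hf₃ w hw) (hRe w hw))
    (fun w _ => sq_norm_wd_add_sq_norm_wdb_le_Dnorm_sq f w) (fun w _ => sq_nonneg _) hDir hz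
  have hpow : ((1 - ‖z‖) ^ (1 + γ / 2)) ^ 2 = (1 - ‖z‖) ^ (2 + γ) := by
    rw [← rpow_natCast, ← rpow_mul hd.le]
    ring_nf
  have hsq : (Dnorm f z * (1 - ‖z‖) ^ (1 + γ / 2)) ^ 2 ≤ K :=
    calc (Dnorm f z * (1 - ‖z‖) ^ (1 + γ / 2)) ^ 2
        ≤ 2 * (‖wd f z‖ ^ 2 + ‖wdb f z‖ ^ 2) * (1 - ‖z‖) ^ (2 + γ) := by
          rw [mul_pow, hpow]
          gcongr
          exact add_sq_le
      _ ≤ K := by rw [mul_assoc]; exact mul_le_mul_of_nonneg_left hmean zero_le_two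
  rw [le_div_iff₀ (by positivity)]
  linarith [le_sqrt_of_sq_le hsq]
end

section
/- Let 0 ≤ s < 1, s ≤ α < s+1, and ω be a majorant. Let f ∈ C¹(𝔻) satisfy ‖D_f(z)‖ ≤ C/ω((1-|z|)^α) for all z ∈ 𝔻 and some constant C > 0. Then there is a constant C₁ > 0 (one may take C₁ = C·B(1-s, 1+s-α), B the Beta function) such that for all distinct z, w ∈ 𝔻: |f(z) − f(w)| ≤ C₁ |z−w| / ω((1-|z|)^s (1-|w|)^{α-s}). -/
/-!
Integrate the differential of `f` along the segment `χ t = (1 - t) w + t z`. Since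
`1 - ‖χ t‖` dominates both `t (1 - ‖z‖)` and `(1 - t) (1 - ‖w‖)`, the weight satisfies
`(1 - ‖χ t‖) ^ α ≥ ν t * K` with `ν t = t ^ s (1 - t) ^ (α - s)` and
`K = (1 - ‖z‖) ^ s (1 - ‖w‖) ^ (α - s)`. As `ω (ν K) ≥ ν ω K` for a majorant, the Bloch bound gives
`‖D_f (χ t)‖ ≤ C / (ν t ω K)`, and `∫₀¹ (ν t)⁻¹ dt = B(1 - s, 1 + s - α)` is finite because
`s < 1` and `α - s < 1`.
-/

open Complex Metric MeasureTheory

open Set AffineMap ComplexConjugate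

lemma fderiv_apply_eq_wd_mul_add_wdb_mul (f : ℂ → ℂ) (p v : ℂ) :
    fderiv ℝ f p v = wd f p * v + wdb f p * conj v := by
  have hv : v = v.re • (1 : ℂ) + v.im • I := by simp [Complex.real_smul, re_add_im]
  rw [wd, wdb, hv, map_add, map_smul, map_smul]
  simp only [real_smul, mul_one, map_add, map_mul, conj_ofReal, conj_I]
  linear_combination ((v.im : ℂ) * fderiv ℝ f p I) * I_sq

lemma norm_fderiv_apply_le_Dnorm_mul (f : ℂ → ℂ) (p v : ℂ) :
    ‖fderiv ℝ f p v‖ ≤ Dnorm f p * ‖v‖ :=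
  calc ‖fderiv ℝ f p v‖ = ‖wd f p * v + wdb f p * conj v‖ := by
        rw [fderiv_apply_eq_wd_mul_add_wdb_mul]
    _ ≤ ‖wd f p * v‖ + ‖wdb f p * conj v‖ := norm_add_le _ _
    _ = Dnorm f p * ‖v‖ := by rw [norm_mul, norm_mul, RCLike.norm_conj, Dnorm, add_mul]

section Majorant

variable {ω : ℝ → ℝ}

lemma apply_nonneg_of_monotoneOn (hmono : MonotoneOn ω (Ici 0)) (h0 : ω 0 = 0) {x : ℝ}
    (hx : 0 ≤ x) : 0 ≤ ω x :=
  h0 ▸ hmono self_mem_Ici hx hx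

lemma mul_apply_le_apply_mul (hdec : ∀ u t : ℝ, 0 < u → u ≤ t → ω t / t ≤ ω u / u)
    {ν u : ℝ} (hν : 0 < ν) (hν1 : ν ≤ 1) (hu : 0 < u) : ν * ω u ≤ ω (ν * u) := by
  have hνu : 0 < ν * u := mul_pos hν hu
  have h := hdec (ν * u) u hνu (mul_le_of_le_one_left hu.le hν1)
  rw [div_le_div_iff₀ hu hνu] at h
  exact le_of_mul_le_mul_right (by linarith) hu

lemma eqOn_zero_of_apply_eq_zero (hmono : MonotoneOn ω (Ici 0)) (h0 : ω 0 = 0)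
    (hdec : ∀ u t : ℝ, 0 < u → u ≤ t → ω t / t ≤ ω u / u) {u : ℝ} (hu : 0 < u)
    (hωu : ω u = 0) : EqOn ω 0 (Ici 0) := by
  intro x (hx : 0 ≤ x)
  show ω x = 0
  refine le_antisymm ?_ (apply_nonneg_of_monotoneOn hmono h0 hx)
  rcases le_total x u with hxu | hux
  · exact hωu ▸ hmono hx hu.le hxu
  · have h := hdec u x hu hux
    rwa [hωu, zero_div, div_le_iff₀ (hu.trans_le hux), zero_mul] at h

lemma inv_apply_le_inv_mul_apply (hmono : MonotoneOn ω (Ici 0)) (h0 : ω 0 = 0)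
    (hdec : ∀ u t : ℝ, 0 < u → u ≤ t → ω t / t ≤ ω u / u) {ν K x : ℝ} (hν : 0 < ν)
    (hν1 : ν ≤ 1) (hK : 0 < K) (hx : ν * K ≤ x) : (ω x)⁻¹ ≤ (ν * ω K)⁻¹ := by
  have hνK : 0 < ν * K := mul_pos hν hK
  rcases (apply_nonneg_of_monotoneOn hmono h0 hK.le).eq_or_lt with hωK | hωK
  -- a majorant vanishing at one positive point vanishes on `[0, ∞)`, and both sides are `0⁻¹ = 0`
  · rw [eqOn_zero_of_apply_eq_zero hmono h0 hdec hK hωK.symm (hνK.le.trans hx : 0 ≤ x),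
      ← hωK]
    simp
  · exact inv_anti₀ (mul_pos hν hωK)
      ((mul_apply_le_apply_mul hdec hν hν1 hK).trans (hmono hνK.le (hνK.le.trans hx) hx))

end Majorant

lemma norm_lineMap_le {E : Type*} [SeminormedAddCommGroup E] [NormedSpace ℝ E] (a b : E)
    {t : ℝ} (ht : t ∈ Icc 0 1) : ‖lineMap a b t‖ ≤ (1 - t) * ‖a‖ + t * ‖b‖ := by
  rw [lineMap_apply_module]
  refine (norm_add_le _ _).trans_eq ?_
  rw [norm_smul, norm_smul, Real.norm_of_nonneg (sub_nonneg.2 ht.2), Real.norm_of_nonneg ht.1]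

lemma rpow_mul_rpow_le_rpow_add {p q x a b : ℝ} (hp : 0 ≤ p) (hq : 0 ≤ q) (hpx : p ≤ x)
    (hqx : q ≤ x) (ha : 0 ≤ a) (hb : 0 ≤ b) : p ^ a * q ^ b ≤ x ^ (a + b) := by
  rw [Real.rpow_add_of_nonneg (hp.trans hpx) ha hb]
  gcongr
  exact Real.rpow_nonneg (hp.trans hpx) a

lemma rpow_mul_rpow_mul_le_one_sub_norm_lineMap_rpow {E : Type*} [SeminormedAddCommGroup E]
    [NormedSpace ℝ E] {a b : E} (ha : ‖a‖ ≤ 1) (hb : ‖b‖ ≤ 1) {s α t : ℝ} (hs : 0 ≤ s)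
    (hsα : s ≤ α) (ht : t ∈ Icc 0 1) :
    t ^ s * (1 - t) ^ (α - s) * ((1 - ‖b‖) ^ s * (1 - ‖a‖) ^ (α - s)) ≤
      (1 - ‖lineMap a b t‖) ^ α := by
  have hline := norm_lineMap_le a b ht
  have ht1 : 0 ≤ 1 - t := sub_nonneg.2 ht.2
  calc t ^ s * (1 - t) ^ (α - s) * ((1 - ‖b‖) ^ s * (1 - ‖a‖) ^ (α - s))
      = (t * (1 - ‖b‖)) ^ s * ((1 - t) * (1 - ‖a‖)) ^ (α - s) := by
        rw [Real.mul_rpow ht.1 (sub_nonneg.2 hb), Real.mul_rpow ht1 (sub_nonneg.2 ha)]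
        ring
    _ ≤ (1 - ‖lineMap a b t‖) ^ (s + (α - s)) :=
        rpow_mul_rpow_le_rpow_add (mul_nonneg ht.1 (sub_nonneg.2 hb))
          (mul_nonneg ht1 (sub_nonneg.2 ha)) (by linarith [mul_le_mul_of_nonneg_left ha ht1])
          (by linarith [mul_le_mul_of_nonneg_left hb ht.1]) hs (sub_nonneg.2 hsα)
    _ = (1 - ‖lineMap a b t‖) ^ α := by rw [add_sub_cancel]

lemma intervalIntegrable_rpow_mul_one_sub_rpow {a b : ℝ} (ha : -1 < a) (hb : -1 < b) :
    IntervalIntegrable (fun t : ℝ ↦ t ^ a * (1 - t) ^ b) volume 0 1 := by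
  have hbeta := (betaIntegral_convergent (u := a + 1) (v := b + 1)
    (by simp; linarith) (by simp; linarith)).norm
  refine hbeta.congr_uIoo fun t ht ↦ ?_
  rw [uIoo_of_le zero_le_one] at ht
  simp only [add_sub_cancel_right, norm_mul]
  rw [← ofReal_one, ← ofReal_sub, norm_cpow_eq_rpow_re_of_pos ht.1,
    norm_cpow_eq_rpow_re_of_pos (sub_pos.2 ht.2), ofReal_re, ofReal_re]

lemma integral_rpow_mul_one_sub_rpow_pos {a b : ℝ} (ha : -1 < a) (hb : -1 < b) :
    0 < ∫ t in (0 : ℝ)..1, t ^ a * (1 - t) ^ b :=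
  intervalIntegral.intervalIntegral_pos_of_pos_on
    (intervalIntegrable_rpow_mul_one_sub_rpow ha hb)
    (fun _ ht ↦ mul_pos (Real.rpow_pos_of_pos ht.1 _) (Real.rpow_pos_of_pos (sub_pos.2 ht.2) _))
    zero_lt_one

lemma norm_sub_le_integral_of_norm_fderiv_lineMap_le {E F : Type*} [NormedAddCommGroup E]
    [NormedSpace ℝ E] [NormedAddCommGroup F] [NormedSpace ℝ F] {f : E → F} {U : Set E}
    (hU : IsOpen U) (hUc : Convex ℝ U) (hf : DifferentiableOn ℝ f U) {a b : E} (ha : a ∈ U)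
    (hb : b ∈ U) {B : ℝ → ℝ}
    (hB : ∀ t ∈ Ioo (0 : ℝ) 1, ‖fderiv ℝ f (lineMap a b t) (b - a)‖ ≤ B t)
    (hBi : IntervalIntegrable B volume 0 1) :
    ‖f b - f a‖ ≤ ∫ t in (0 : ℝ)..1, B t := by
  have hmem : ∀ t ∈ Icc (0 : ℝ) 1, lineMap a b t ∈ U := fun t ht ↦ hUc.lineMap_mem ha hb ht
  have hderiv : ∀ t ∈ Icc (0 : ℝ) 1,
      HasDerivAt (fun u ↦ f (lineMap a b u)) (fderiv ℝ f (lineMap a b t) (b - a)) t :=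
    fun t ht ↦ ((hf _ (hmem t ht)).differentiableAt (hU.mem_nhds (hmem t ht))).hasFDerivAt
      |>.comp_hasDerivAt t hasDerivAt_lineMap
  have h := norm_sub_le_integral_of_norm_deriv_le_of_le zero_le_one
    (fun t ht ↦ (hderiv t ht).continuousAt.continuousWithinAt)
    (fun t ht ↦ (hderiv t (Ioo_subset_Icc_self ht)).differentiableAt.differentiableWithinAt)
    (Filter.Eventually.of_forall fun t ht ↦
      (hderiv t (Ioo_subset_Icc_self ht)).deriv ▸ hB t ht) hBi
  simpa only [lineMap_apply_zero, lineMap_apply_one] using h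

lemma norm_fderiv_lineMap_le {ω : ℝ → ℝ} (hmono : MonotoneOn ω (Ici 0)) (h0 : ω 0 = 0)
    (hdec : ∀ u t : ℝ, 0 < u → u ≤ t → ω t / t ≤ ω u / u) {s α C : ℝ} (hs0 : 0 ≤ s)
    (hsα : s ≤ α) (hC : 0 ≤ C) {f : ℂ → ℂ}
    (hbd : ∀ z ∈ ball (0:ℂ) 1, Dnorm f z ≤ C / ω ((1 - ‖z‖) ^ α)) {z w : ℂ}
    (hz : z ∈ ball (0:ℂ) 1) (hw : w ∈ ball (0:ℂ) 1) {t : ℝ} (ht : t ∈ Ioo 0 1) :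
    ‖fderiv ℝ f (lineMap w z t) (z - w)‖ ≤
      C * ‖z - w‖ / ω ((1 - ‖z‖) ^ s * (1 - ‖w‖) ^ (α - s)) * (t ^ (-s) * (1 - t) ^ (s - α)) := by
  set K := (1 - ‖z‖) ^ s * (1 - ‖w‖) ^ (α - s)
  set ν := t ^ s * (1 - t) ^ (α - s)
  set p := lineMap w z t
  have hz1 : ‖z‖ < 1 := mem_ball_zero_iff.1 hz
  have hw1 : ‖w‖ < 1 := mem_ball_zero_iff.1 hw
  have hp : p ∈ ball (0:ℂ) 1 := (convex_ball (0:ℂ) 1).lineMap_mem hw hz (Ioo_subset_Icc_self ht)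
  have hK : 0 < K := by
    have := sub_pos.2 hz1; have := sub_pos.2 hw1; positivity
  have ht1 : 0 < 1 - t := sub_pos.2 ht.2
  have hν : 0 < ν := by have := ht.1; positivity
  have hν1 : ν ≤ 1 := mul_le_one₀ (Real.rpow_le_one ht.1.le ht.2.le hs0) (by positivity)
    (Real.rpow_le_one ht1.le (by linarith [ht.1]) (sub_nonneg.2 hsα))
  have hweight : ν * K ≤ (1 - ‖p‖) ^ α :=
    rpow_mul_rpow_mul_le_one_sub_norm_lineMap_rpow hw1.le hz1.le hs0 hsα (Ioo_subset_Icc_self ht)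
  have hkernel : t ^ (-s) * (1 - t) ^ (s - α) = ν⁻¹ := by
    rw [mul_inv, Real.rpow_neg ht.1.le, ← Real.rpow_neg ht1.le, neg_sub]
  calc ‖fderiv ℝ f p (z - w)‖ ≤ Dnorm f p * ‖z - w‖ := norm_fderiv_apply_le_Dnorm_mul f p _
    _ ≤ C * (ω ((1 - ‖p‖) ^ α))⁻¹ * ‖z - w‖ := by
        rw [← div_eq_mul_inv]; gcongr; exact hbd p hp
    _ ≤ C * (ν * ω K)⁻¹ * ‖z - w‖ := by
        have := inv_apply_le_inv_mul_apply hmono h0 hdec hν hν1 hK hweight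
        gcongr
    _ = C * ‖z - w‖ / ω K * (t ^ (-s) * (1 - t) ^ (s - α)) := by
        rw [hkernel, mul_inv]; ring

theorem bloch_implies_lipschitz_general (s α : ℝ) (hs0 : 0 ≤ s) (hs1 : s < 1)
    (hsα : s ≤ α) (hα : α < s + 1)
    (ω : ℝ → ℝ)
    (hmono : MonotoneOn ω (Set.Ici 0))
    (h0 : ω 0 = 0)
    (hdec : ∀ u t : ℝ, 0 < u → u ≤ t → ω t / t ≤ ω u / u)
    (f : ℂ → ℂ) (hf : ContDiffOn ℝ 1 f (ball (0:ℂ) 1))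
    (C : ℝ) (hC : 0 < C)
    (hbd : ∀ z ∈ ball (0:ℂ) 1, Dnorm f z ≤ C / ω ((1 - ‖z‖) ^ α)) :
    ∃ C₁ : ℝ, 0 < C₁ ∧ ∀ z ∈ ball (0:ℂ) 1, ∀ w ∈ ball (0:ℂ) 1, z ≠ w →
      ‖f z - f w‖ ≤ C₁ * ‖z - w‖ / ω ((1 - ‖z‖) ^ s * (1 - ‖w‖) ^ (α - s)) := by
  have hs_exp : -1 < -s := by linarith
  have hα_exp : -1 < s - α := by linarith
  refine ⟨C * ∫ t in (0 : ℝ)..1, t ^ (-s) * (1 - t) ^ (s - α),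
    mul_pos hC (integral_rpow_mul_one_sub_rpow_pos hs_exp hα_exp), fun z hz w hw _ ↦ ?_⟩
  calc ‖f z - f w‖ ≤ ∫ t in (0 : ℝ)..1, C * ‖z - w‖ / ω ((1 - ‖z‖) ^ s * (1 - ‖w‖) ^ (α - s)) *
        (t ^ (-s) * (1 - t) ^ (s - α)) :=
      norm_sub_le_integral_of_norm_fderiv_lineMap_le isOpen_ball (convex_ball 0 1)
        (hf.differentiableOn one_ne_zero) hw hz
        (fun t ht ↦ norm_fderiv_lineMap_le hmono h0 hdec hs0 hsα hC.le hbd hz hw ht)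
        ((intervalIntegrable_rpow_mul_one_sub_rpow hs_exp hα_exp).const_mul _)
    _ = _ := by rw [intervalIntegral.integral_const_mul]; ring

/-- Let 0 ≤ s < 1, s ≤ α < s+1, ω a majorant, f ∈ C¹(𝔻) with
‖D_f(z)‖ ≤ C/ω((1-|z|)^α). Then there is C₁ > 0 such that for all distinct
z, w ∈ 𝔻: |f(z)-f(w)| ≤ C₁|z-w|/ω((1-|z|)^s (1-|w|)^{α-s}). -/
theorem bloch_implies_lipschitz (s α : ℝ) (hs0 : 0 ≤ s) (hs1 : s < 1)
    (hsα : s ≤ α) (hα : α < s + 1)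
    (ω : ℝ → ℝ)
    (hcont : ContinuousOn ω (Set.Ici 0))
    (hmono : MonotoneOn ω (Set.Ici 0))
    (h0 : ω 0 = 0)
    (hdec : ∀ u t : ℝ, 0 < u → u ≤ t → ω t / t ≤ ω u / u)
    (f : ℂ → ℂ) (hf : ContDiffOn ℝ 1 f (ball (0:ℂ) 1))
    (C : ℝ) (hC : 0 < C)
    (hbd : ∀ z ∈ ball (0:ℂ) 1, Dnorm f z ≤ C / ω ((1 - ‖z‖) ^ α)) :
    ∃ C₁ : ℝ, 0 < C₁ ∧ ∀ z ∈ ball (0:ℂ) 1, ∀ w ∈ ball (0:ℂ) 1, z ≠ w →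
      ‖f z - f w‖ ≤ C₁ * ‖z - w‖ / ω ((1 - ‖z‖) ^ s * (1 - ‖w‖) ^ (α - s)) :=
  bloch_implies_lipschitz_general s α hs0 hs1 hsα hα ω hmono h0 hdec f hf C hC hbd
end
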